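/- In the x-characteristic ring of the system u_{xy} = v_x, v_{xy} = 12 u u_x, the operators X3, X13, X313, X3313 are linearly independent over functions of the jet variables, where X13 = [X1,X3], X313 = [X3,X13], X3313 = [X3,X313]; consequently dim L_k = 1 for k = 2, 3, 4 (each L_k being spanned by a single nonzero bracket of length k, all other length-k brackets vanishing). -/

import Mathlib

/-- Jet variables for the system `u_{xy} = v_x`, `v_{xy} = 12 u u_x`:
`uu k` is `u_k` (with `uu 0 = u`) and `vv k` is `v_k` (with `vv 0 = v`). -/
abbrev J : Type := Fin 2 × ℕ

/-- The variable `u_k`. -/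
def uu (k : ℕ) : J := (0, k)

/-- The variable `v_k`. -/
def vv (k : ℕ) : J := (1, k)

/-- Partial derivative of `f` with respect to coordinate `i` at the point `z`. -/
noncomputable def pd {ι : Type*} [DecidableEq ι] (i : ι) (f : (ι → ℝ) → ℝ) (z : ι → ℝ) : ℝ :=
  deriv (fun t => f (Function.update z i t)) (z i)

/-- A function of the jet variables depending smoothly on finitely many of them. -/
def SmoothCyl {ι : Type*} (f : (ι → ℝ) → ℝ) : Prop :=
  ∃ (n : ℕ) (v : Fin n → ι) (g : (Fin n → ℝ) → ℝ),
    ContDiff ℝ (⊤ : ℕ∞) g ∧ ∀ z, f z = g fun k => z (v k)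


section basic
variable {ι : Type*} [DecidableEq ι]

lemma pd_of_invariant {i : ι} {F : (ι → ℝ) → ℝ} {z : ι → ℝ}
    (h : ∀ t, F (Function.update z i t) = F z) : pd i F z = 0 := by
  unfold pd
  have : (fun t => F (Function.update z i t)) = fun _ => F z := funext h
  rw [this, deriv_const]

lemma pd_const_mul (i : ι) (a : ℝ) (F : (ι → ℝ) → ℝ) (z : ι → ℝ) :
    pd i (fun w => a * F w) z = a * pd i F z := by
  unfold pd
  exact deriv_const_mul_field a

lemma pd_coord (i j : ι) (z : ι → ℝ) :
    pd i (fun w => w j) z = if j = i then 1 else 0 := by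
  by_cases h : j = i
  · subst h
    unfold pd
    simp [Function.update_self]
  · rw [if_neg h]
    exact pd_of_invariant fun t => Function.update_of_ne h _ _

end basic

section calc1
variable {n : ℕ}

lemma update_eq_affine (x : Fin n → ℝ) (m : Fin n) :
    (fun t : ℝ => Function.update x m t) = fun t => x + (t - x m) • (Pi.single m 1 : Fin n → ℝ) := by
  funext t
  funext j
  by_cases h : j = m
  · subst h; simp
  · simp [Function.update_of_ne h, Pi.single_apply, h]

lemma hasDerivAt_comp_update {G : (Fin n → ℝ) → ℝ} {x : Fin n → ℝ} (m : Fin n)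
    (hG : DifferentiableAt ℝ G x) :
    HasDerivAt (fun t => G (Function.update x m t)) (fderiv ℝ G x (Pi.single m 1)) (x m) := by
  have h1 : HasDerivAt (fun t : ℝ => Function.update x m t) (Pi.single m 1) (x m) := by
    rw [update_eq_affine]
    have := (((hasDerivAt_id (x m)).sub_const (x m)).smul_const (Pi.single m 1 : Fin n → ℝ)).const_add x
    simpa using this
  have hx : Function.update x m (x m) = x := Function.update_eq_self m x
  have hF : HasFDerivAt G (fderiv ℝ G x) (Function.update x m (x m)) := by
    rw [hx]; exact hG.hasFDerivAt
  have h2 := hF.comp_hasDerivAt (x m) h1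
  exact h2

lemma pd_eq_fderiv {G : (Fin n → ℝ) → ℝ} {x : Fin n → ℝ} (m : Fin n)
    (hG : DifferentiableAt ℝ G x) :
    pd m G x = fderiv ℝ G x (Pi.single m 1) :=
  (hasDerivAt_comp_update m hG).deriv

lemma contDiff_pd {G : (Fin n → ℝ) → ℝ} (hG : ContDiff ℝ (⊤ : ℕ∞) G) (m : Fin n) :
    ContDiff ℝ (⊤ : ℕ∞) (pd m G) := by
  have : pd m G = fun x => fderiv ℝ G x (Pi.single m 1) := by
    funext x
    exact pd_eq_fderiv m (hG.differentiable (by simp) x)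
  rw [this]
  exact (hG.fderiv_right (mod_cast le_top)).clm_apply contDiff_const

lemma pd_pd_comm {G : (Fin n → ℝ) → ℝ} (hG : ContDiff ℝ (⊤ : ℕ∞) G) (m m' : Fin n) (x : Fin n → ℝ) :
    pd m (pd m' G) x = pd m' (pd m G) x := by
  have hrep : ∀ k : Fin n, pd k G = fun y => fderiv ℝ G y (Pi.single k 1) := by
    intro k; funext y; exact pd_eq_fderiv k (hG.differentiable (by simp) y)
  have hfd : ContDiff ℝ (⊤ : ℕ∞) (fderiv ℝ G) := hG.fderiv_right (mod_cast le_top)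
  have key : ∀ k k' : Fin n, pd k (pd k' G) x =
      fderiv ℝ (fderiv ℝ G) x (Pi.single k 1) (Pi.single k' 1) := by
    intro k k'
    rw [hrep k']
    rw [pd_eq_fderiv k ((hfd.clm_apply contDiff_const).differentiable (by simp) x)]
    rw [fderiv_clm_apply ((hfd.differentiable (by simp) x)) (differentiableAt_const _)]
    simp
  rw [key m m', key m' m]
  have hsymm := second_derivative_symmetric
    (f := G) (f' := fderiv ℝ G) (f'' := fderiv ℝ (fderiv ℝ G) x)
    (fun y => (hG.differentiable (by simp) y).hasFDerivAt)
    ((hfd.differentiable (by simp) x).hasFDerivAt)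
    (Pi.single m 1) (Pi.single m' 1)
  exact hsymm

end calc1

section cyl
variable {ι : Type*} [DecidableEq ι]

/-- Every smooth cylindrical function has a representation with injective coordinates. -/
lemma SmoothCyl.exists_inj {f : (ι → ℝ) → ℝ} (hf : SmoothCyl f) :
    ∃ (n : ℕ) (v : Fin n → ι) (g : (Fin n → ℝ) → ℝ),
      Function.Injective v ∧ ContDiff ℝ (⊤ : ℕ∞) g ∧ ∀ z, f z = g fun k => z (v k) := by
  obtain ⟨n, v, g, hg, hfg⟩ := hf
  classical
  set s : Finset ι := Finset.image v Finset.univ with hs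
  set e := s.equivFin with he
  have hmem : ∀ k, v k ∈ s := fun k => Finset.mem_image_of_mem v (Finset.mem_univ k)
  refine ⟨s.card, fun k => (e.symm k : ι), fun x => g fun k => x (e ⟨v k, hmem k⟩), ?_, ?_, ?_⟩
  · intro a b hab
    have : (e.symm a : ι) = (e.symm b : ι) := hab
    exact e.symm.injective (Subtype.ext this)
  · have hlin : ContDiff ℝ (⊤ : ℕ∞) (fun (x : Fin s.card → ℝ) (k : Fin n) =>
        x (e ⟨v k, hmem k⟩)) := by
      apply contDiff_pi.2
      intro k
      exact (ContinuousLinearMap.proj (R := ℝ) (φ := fun _ : Fin s.card => ℝ)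
        (e ⟨v k, hmem k⟩)).contDiff
    exact hg.comp hlin
  · intro z
    rw [hfg]
    congr 1
    funext k
    congr 1
    exact (congrArg Subtype.val (e.symm_apply_apply ⟨v k, _⟩)).symm

/-- Chain rule for a cylindrical function at one of its own coordinates. -/
lemma pd_cyl {n : ℕ} {v : Fin n → ι} (hv : Function.Injective v)
    (g : (Fin n → ℝ) → ℝ) (m : Fin n) (z : ι → ℝ) :
    pd (v m) (fun w => g fun k => w (v k)) z = pd m g (fun k => z (v k)) := by
  unfold pd
  have h1 : (fun t => g fun k => Function.update z (v m) t (v k))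
      = fun t => g (Function.update (fun k => z (v k)) m t) := by
    funext t
    congr 1
    funext k
    by_cases h : k = m
    · subst h; simp
    · rw [Function.update_of_ne (fun hc => h (hv hc)), Function.update_of_ne h]
  rw [h1]

/-- A cylindrical function does not depend on coordinates outside the range. -/
lemma pd_cyl_not_mem {n : ℕ} {v : Fin n → ι} {d : ι} (hd : d ∉ Set.range v)
    (g : (Fin n → ℝ) → ℝ) (z : ι → ℝ) :
    pd d (fun w => g fun k => w (v k)) z = 0 := by
  apply pd_of_invariant
  intro t
  congr 1
  funext k
  exact Function.update_of_ne (fun hc => hd ⟨k, hc⟩) _ _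

end cyl

/-- The total `x`-derivative `X = u1 ∂/∂u + v1 ∂/∂v + u2 ∂/∂u1 + v2 ∂/∂v1 + …`. -/
noncomputable def Xop (f : (J → ℝ) → ℝ) (z : J → ℝ) : ℝ :=
  ∑' k : ℕ, (z (uu (k + 1)) * pd (uu k) f z + z (vv (k + 1)) * pd (vv k) f z)

/-- The coefficients `c k = X^k (u u1)` of `X3`: `c 0 = u u1`, `c (k+1) = X (c k)`. -/
noncomputable def c : ℕ → (J → ℝ) → ℝ
  | 0 => fun z => z (uu 0) * z (uu 1)
  | k + 1 => Xop (c k)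

/-- The characteristic vector field
`X3 = Σ_{k≥1} v_k ∂/∂u_k + 12 Σ_{k≥1} X^{k−1}(u u1) ∂/∂v_k`. -/
noncomputable def X3op (f : (J → ℝ) → ℝ) (z : J → ℝ) : ℝ :=
  ∑' k : ℕ, (z (vv (k + 1)) * pd (uu (k + 1)) f z + 12 * c k z * pd (vv (k + 1)) f z)

/-- `X13 = [X1, X3] = 12 Σ_{k≥1} u_k ∂/∂v_k`. -/
noncomputable def X13op (f : (J → ℝ) → ℝ) (z : J → ℝ) : ℝ :=
  12 * ∑' k : ℕ, z (uu (k + 1)) * pd (vv (k + 1)) f z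

/-- `X313 = [X3, X13] = 12 Σ_{k≥1} (v_k ∂/∂v_k − u_k ∂/∂u_k)`. -/
noncomputable def X313op (f : (J → ℝ) → ℝ) (z : J → ℝ) : ℝ :=
  12 * ∑' k : ℕ, (z (vv (k + 1)) * pd (vv (k + 1)) f z - z (uu (k + 1)) * pd (uu (k + 1)) f z)

/-- `X3313 = [X3, X313]`. -/
noncomputable def X3313op (f : (J → ℝ) → ℝ) : (J → ℝ) → ℝ :=
  fun z => X3op (X313op f) z - X313op (X3op f) z



section master
variable {ι : Type*} [DecidableEq ι]

/-- Representation of a partial derivative of a cylindrical function. -/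
lemma pd_cyl_rep {n : ℕ} {v : Fin n → ι} (hv : Function.Injective v)
    (G : (Fin n → ℝ) → ℝ) (j : ι) (z : ι → ℝ) :
    pd j (fun w => G fun k => w (v k)) z
      = (if h : ∃ m, v m = j then pd h.choose G else fun _ => 0) (fun k => z (v k)) := by
  by_cases h : ∃ m, v m = j
  · rw [dif_pos h]
    conv_lhs => rw [← h.choose_spec]
    exact pd_cyl hv G h.choose z
  · rw [dif_neg h]
    exact pd_cyl_not_mem (fun ⟨m, hm⟩ => h ⟨m, hm⟩) G z

lemma contDiff_Qaux {n : ℕ} {v : Fin n → ι} {G : (Fin n → ℝ) → ℝ}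
    (hG : ContDiff ℝ (⊤ : ℕ∞) G) (j : ι) :
    ContDiff ℝ (⊤ : ℕ∞) (if h : ∃ m, v m = j then pd h.choose G else fun _ => 0) := by
  split
  · exact contDiff_pd hG _
  · exact contDiff_const

lemma comp_update {n : ℕ} {v : Fin n → ι} (hv : Function.Injective v)
    (z : ι → ℝ) (m0 : Fin n) (t : ℝ) :
    (fun k => Function.update z (v m0) t (v k))
      = Function.update (fun k => z (v k)) m0 t := by
  funext k
  by_cases h : k = m0
  · subst h; simp
  · rw [Function.update_of_ne (fun hc => h (hv hc)), Function.update_of_ne h]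

/-- Master lemma: a first-order operator whose coefficients do not depend on the
coordinate `i` and whose directions avoid `i` commutes with `∂/∂i` on smooth
cylindrical functions. -/
lemma pd_comm_tsum {i : ι} {a b : ℕ → (ι → ℝ) → ℝ} {d e : ℕ → ι}
    (ha : ∀ k z t, a k (Function.update z i t) = a k z)
    (hb : ∀ k z t, b k (Function.update z i t) = b k z)
    (hdi : Function.Injective d) (hei : Function.Injective e)
    {f : (ι → ℝ) → ℝ} (hf : SmoothCyl f) (z : ι → ℝ) :
    pd i (fun w => ∑' k : ℕ, (a k w * pd (d k) f w + b k w * pd (e k) f w)) z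
      = ∑' k : ℕ, (a k z * pd (d k) (pd i f) z + b k z * pd (e k) (pd i f) z) := by
  classical
  obtain ⟨n, v, g, hv, hg, hfg⟩ := hf.exists_inj
  have hfe : f = fun w => g fun k => w (v k) := funext hfg
  subst hfe
  set x : Fin n → ℝ := fun k => z (v k) with hxdef
  -- a bound beyond which all directions are outside the range of `v`
  obtain ⟨N, hN⟩ : ∃ N : ℕ, ∀ k, N ≤ k → d k ∉ Set.range v ∧ e k ∉ Set.range v := by
    have hSd : {k : ℕ | d k ∈ Set.range v}.Finite :=
      Set.Finite.preimage hdi.injOn (Set.finite_range v)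
    have hSe : {k : ℕ | e k ∈ Set.range v}.Finite :=
      Set.Finite.preimage hei.injOn (Set.finite_range v)
    obtain ⟨M, hM⟩ := (hSd.union hSe).bddAbove
    refine ⟨M + 1, fun k hk => ?_⟩
    constructor
    · intro hmem
      have := hM (Set.mem_union_left _ hmem)
      omega
    · intro hmem
      have := hM (Set.mem_union_right _ hmem)
      omega
  by_cases hi : i ∈ Set.range v
  · obtain ⟨m0, hm0⟩ := hi
    have hzi : z i = x m0 := by rw [hxdef, ← hm0]
    have hpdif : (pd i fun w => g fun k => w (v k))
        = fun w => (pd m0 g) fun k => w (v k) := by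
      funext w
      rw [← hm0]
      exact pd_cyl hv g m0 w
    -- rewrite RHS as a finite sum
    have hRHS : ∑' k : ℕ, (a k z * pd (d k) (pd i fun w => g fun k => w (v k)) z
          + b k z * pd (e k) (pd i fun w => g fun k => w (v k)) z)
        = ∑ k ∈ Finset.range (N + 1),
            (a k z * ((if h : ∃ m, v m = d k then pd h.choose (pd m0 g) else fun _ => 0) x)
           + b k z * ((if h : ∃ m, v m = e k then pd h.choose (pd m0 g) else fun _ => 0) x)) := by
      rw [hpdif]
      rw [tsum_eq_sum (s := Finset.range (N + 1)) ?_]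
      · refine Finset.sum_congr rfl fun k _ => ?_
        rw [pd_cyl_rep hv (pd m0 g) (d k) z, pd_cyl_rep hv (pd m0 g) (e k) z]
      · intro k hk
        have hk' : N ≤ k := by
          simp only [Finset.mem_range, not_lt] at hk
          omega
        rw [pd_cyl_not_mem ((hN k hk').1) (pd m0 g) z,
          pd_cyl_not_mem ((hN k hk').2) (pd m0 g) z]
        ring
    rw [hRHS]
    -- now handle the left-hand side
    have hfun : (fun t : ℝ => ∑' k : ℕ,
          (a k (Function.update z i t) * pd (d k) (fun w => g fun k => w (v k))
              (Function.update z i t)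
            + b k (Function.update z i t) * pd (e k) (fun w => g fun k => w (v k))
              (Function.update z i t)))
        = fun t => ∑ k ∈ Finset.range (N + 1),
            (a k z * (if h : ∃ m, v m = d k then pd h.choose g else fun _ => 0)
                (Function.update x m0 t)
           + b k z * (if h : ∃ m, v m = e k then pd h.choose g else fun _ => 0)
                (Function.update x m0 t)) := by
      funext t
      rw [tsum_eq_sum (s := Finset.range (N + 1)) ?_]
      · refine Finset.sum_congr rfl fun k _ => ?_
        have hcu : (fun k => Function.update z i t (v k)) = Function.update x m0 t := by
          rw [hxdef, ← hm0]
          exact comp_update hv z m0 t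
        rw [ha k z t, hb k z t,
          pd_cyl_rep hv g (d k) (Function.update z i t),
          pd_cyl_rep hv g (e k) (Function.update z i t), hcu]
      · intro k hk
        have hk' : N ≤ k := by
          simp only [Finset.mem_range, not_lt] at hk
          omega
        rw [pd_cyl_not_mem ((hN k hk').1) g, pd_cyl_not_mem ((hN k hk').2) g]
        ring
    have hder : HasDerivAt (fun t => ∑ k ∈ Finset.range (N + 1),
          (a k z * (if h : ∃ m, v m = d k then pd h.choose g else fun _ => 0)
              (Function.update x m0 t)
           + b k z * (if h : ∃ m, v m = e k then pd h.choose g else fun _ => 0)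
              (Function.update x m0 t)))
        (∑ k ∈ Finset.range (N + 1),
          (a k z * fderiv ℝ (if h : ∃ m, v m = d k then pd h.choose g else fun _ => 0) x
              (Pi.single m0 1)
           + b k z * fderiv ℝ (if h : ∃ m, v m = e k then pd h.choose g else fun _ => 0) x
              (Pi.single m0 1))) (x m0) := by
      refine HasDerivAt.fun_sum fun k _ => HasDerivAt.add ?_ ?_
      · exact (hasDerivAt_comp_update m0
          ((contDiff_Qaux hg (d k)).differentiable (by simp) x)).const_mul _
      · exact (hasDerivAt_comp_update m0
          ((contDiff_Qaux hg (e k)).differentiable (by simp) x)).const_mul _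
    have hLHS : pd i (fun w => ∑' k : ℕ,
          (a k w * pd (d k) (fun w => g fun k => w (v k)) w
            + b k w * pd (e k) (fun w => g fun k => w (v k)) w)) z
        = deriv (fun t => ∑' k : ℕ,
          (a k (Function.update z i t) * pd (d k) (fun w => g fun k => w (v k))
              (Function.update z i t)
            + b k (Function.update z i t) * pd (e k) (fun w => g fun k => w (v k))
              (Function.update z i t))) (z i) := rfl
    rw [hLHS, hfun, hzi, hder.deriv]
    refine Finset.sum_congr rfl fun k _ => ?_
    have key : ∀ j : ι,
        fderiv ℝ (if h : ∃ m, v m = j then pd h.choose g else fun _ => 0) x (Pi.single m0 1)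
          = (if h : ∃ m, v m = j then pd h.choose (pd m0 g) else fun _ => 0) x := by
      intro j
      rw [← pd_eq_fderiv m0 ((contDiff_Qaux hg j).differentiable (by simp) x)]
      by_cases h : ∃ m, v m = j
      · simp only [dif_pos h]
        exact pd_pd_comm hg m0 h.choose x
      · simp only [dif_neg h]
        exact pd_of_invariant (fun _ => rfl)
    rw [key (d k), key (e k)]
  · -- `i` is not among the variables of `f`
    have hpdif : (pd i fun w => g fun k => w (v k)) = fun _ => (0:ℝ) := by
      funext w
      exact pd_cyl_not_mem hi g w
    rw [hpdif]
    have hRHS : ∀ k : ℕ, a k z * pd (d k) (fun _ => (0:ℝ)) z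
        + b k z * pd (e k) (fun _ => (0:ℝ)) z = 0 := by
      intro k
      rw [pd_of_invariant (fun _ => rfl), pd_of_invariant (fun _ => rfl)]
      ring
    rw [tsum_congr hRHS, tsum_zero]
    apply pd_of_invariant
    intro t
    refine tsum_congr fun k => ?_
    have hupd : (fun k' => Function.update z i t (v k')) = fun k' => z (v k') := by
      funext k'
      exact Function.update_of_ne (fun hc => hi ⟨k', hc⟩) _ _
    rw [ha k z t, hb k z t,
      pd_cyl_rep hv g (d k) (Function.update z i t), pd_cyl_rep hv g (e k) z,
      pd_cyl_rep hv g (d k) z, pd_cyl_rep hv g (e k) (Function.update z i t), hupd]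
end master

section five

lemma uu_ne_vv (k l : ℕ) : uu k ≠ vv l := by simp [uu, vv]

lemma vv_ne_uu (k l : ℕ) : vv k ≠ uu l := by simp [uu, vv]

lemma uu_inj : Function.Injective uu := fun a b h => by simpa [uu] using h

lemma vv_inj : Function.Injective vv := fun a b h => by simpa [vv] using h

/-- `c k` depends only on the `u`-coordinates. -/
lemma c_uu_only : ∀ (k : ℕ) {z z' : J → ℝ}, (∀ j, z (uu j) = z' (uu j)) → c k z = c k z' := by
  intro k
  induction k with
  | zero => intro z z' h; show z (uu 0) * z (uu 1) = z' (uu 0) * z' (uu 1); rw [h 0, h 1]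
  | succ k ih =>
    intro z z' h
    show Xop (c k) z = Xop (c k) z'
    unfold Xop
    refine tsum_congr fun j => ?_
    have hvv : ∀ (w : J → ℝ), pd (vv j) (c k) w = 0 := by
      intro w
      apply pd_of_invariant
      intro t
      apply ih
      intro l
      exact Function.update_of_ne (uu_ne_vv l j) _ _
    have huu : pd (uu j) (c k) z = pd (uu j) (c k) z' := by
      unfold pd
      rw [h j]
      congr 1
      funext t
      apply ih
      intro l
      by_cases hl : l = j
      · subst hl; simp
      · rw [Function.update_of_ne (fun hc => hl (uu_inj hc)),
          Function.update_of_ne (fun hc => hl (uu_inj hc))]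
        exact h l
    rw [hvv z, hvv z', huu, h (j + 1), mul_zero, mul_zero]

lemma c_update_vv0 (k : ℕ) (z : J → ℝ) (t : ℝ) :
    c k (Function.update z (vv 0) t) = c k z :=
  c_uu_only k fun j => Function.update_of_ne (uu_ne_vv j 0) _ _

/-- Commutation of `∂/∂v` with `X3`. -/
lemma comm_vv0_X3 {f : (J → ℝ) → ℝ} (hf : SmoothCyl f) (z : J → ℝ) :
    pd (vv 0) (X3op f) z - X3op (pd (vv 0) f) z = 0 := by
  rw [sub_eq_zero]
  exact pd_comm_tsum (i := vv 0)
    (a := fun k w => w (vv (k + 1))) (b := fun k w => 12 * c k w)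
    (d := fun k => uu (k + 1)) (e := fun k => vv (k + 1))
    (fun k z t => Function.update_of_ne (fun hc => by simpa [vv] using hc) _ _)
    (fun k z t => by
      show (12:ℝ) * c k (Function.update z (vv 0) t) = 12 * c k z
      rw [c_update_vv0])
    (fun a b h => by simpa [uu] using h)
    (fun a b h => by simpa [vv] using h) hf z

/-- Commutation of `∂/∂u` or `∂/∂v` with `X13`. -/
lemma comm_X13 {f : (J → ℝ) → ℝ} (hf : SmoothCyl f) (i : J)
    (hiu : ∀ k, uu (k + 1) ≠ i) (hiv : ∀ k, vv (k + 1) ≠ i) (z : J → ℝ) :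
    pd i (X13op f) z - X13op (pd i f) z = 0 := by
  rw [sub_eq_zero]
  have hEq : ∀ (F : (J → ℝ) → ℝ),
      (fun w => (12:ℝ) * ∑' k : ℕ, w (uu (k + 1)) * pd (vv (k + 1)) F w)
      = fun w => 12 * ∑' k : ℕ,
          (w (uu (k + 1)) * pd (vv (k + 1)) F w + 0 * pd (uu (k + 1)) F w) := by
    intro F
    funext w
    congr 1
    exact tsum_congr fun k => by ring
  show pd i (fun w => (12:ℝ) * ∑' k : ℕ, w (uu (k + 1)) * pd (vv (k + 1)) f w) z
      = (12:ℝ) * ∑' k : ℕ, z (uu (k + 1)) * pd (vv (k + 1)) (pd i f) z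
  have hR : (∑' k : ℕ, z (uu (k + 1)) * pd (vv (k + 1)) (pd i f) z)
      = ∑' k : ℕ, (z (uu (k + 1)) * pd (vv (k + 1)) (pd i f) z
          + 0 * pd (uu (k + 1)) (pd i f) z) :=
    tsum_congr fun k => by ring
  rw [hEq f, pd_const_mul, hR]
  congr 1
  exact pd_comm_tsum (i := i)
    (a := fun k w => w (uu (k + 1))) (b := fun _ _ => (0:ℝ))
    (d := fun k => vv (k + 1)) (e := fun k => uu (k + 1))
    (fun k z t => Function.update_of_ne (hiu k) _ _)
    (fun _ _ _ => rfl)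
    (fun a b h => by simpa [vv] using h)
    (fun a b h => by simpa [uu] using h) hf z

/-- Commutation of `∂/∂u` or `∂/∂v` with `X313`. -/
lemma comm_X313 {f : (J → ℝ) → ℝ} (hf : SmoothCyl f) (i : J)
    (hiu : ∀ k, uu (k + 1) ≠ i) (hiv : ∀ k, vv (k + 1) ≠ i) (z : J → ℝ) :
    pd i (X313op f) z - X313op (pd i f) z = 0 := by
  rw [sub_eq_zero]
  have hEq : ∀ (F : (J → ℝ) → ℝ),
      (fun w => (12:ℝ) * ∑' k : ℕ,
          (w (vv (k + 1)) * pd (vv (k + 1)) F w - w (uu (k + 1)) * pd (uu (k + 1)) F w))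
      = fun w => 12 * ∑' k : ℕ,
          (w (vv (k + 1)) * pd (vv (k + 1)) F w + (-w (uu (k + 1))) * pd (uu (k + 1)) F w) := by
    intro F
    funext w
    congr 1
    exact tsum_congr fun k => by ring
  show pd i (fun w => (12:ℝ) * ∑' k : ℕ,
        (w (vv (k + 1)) * pd (vv (k + 1)) f w - w (uu (k + 1)) * pd (uu (k + 1)) f w)) z
      = (12:ℝ) * ∑' k : ℕ,
        (z (vv (k + 1)) * pd (vv (k + 1)) (pd i f) z
          - z (uu (k + 1)) * pd (uu (k + 1)) (pd i f) z)
  have hR : (∑' k : ℕ, (z (vv (k + 1)) * pd (vv (k + 1)) (pd i f) z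
          - z (uu (k + 1)) * pd (uu (k + 1)) (pd i f) z))
      = ∑' k : ℕ, (z (vv (k + 1)) * pd (vv (k + 1)) (pd i f) z
          + (-z (uu (k + 1))) * pd (uu (k + 1)) (pd i f) z) :=
    tsum_congr fun k => by ring
  rw [hEq f, pd_const_mul, hR]
  congr 1
  exact pd_comm_tsum (i := i)
    (a := fun k w => w (vv (k + 1))) (b := fun k w => -w (uu (k + 1)))
    (d := fun k => vv (k + 1)) (e := fun k => uu (k + 1))
    (fun k z t => Function.update_of_ne (hiv k) _ _)
    (fun k z t => by
      show -Function.update z i t (uu (k + 1)) = -z (uu (k + 1))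
      rw [Function.update_of_ne (hiu k)])
    (fun a b h => by simpa [vv] using h)
    (fun a b h => by simpa [uu] using h) hf z

end five

section compute

lemma hasDerivAt_coord {ι : Type*} [DecidableEq ι] (z : ι → ℝ) (i j : ι) :
    HasDerivAt (fun t => Function.update z i t j) (if j = i then 1 else 0) (z i) := by
  by_cases h : j = i
  · subst h
    simp only [if_pos rfl]
    have : (fun t => Function.update z j t j) = fun t => t := by
      funext t; simp
    rw [this]
    exact hasDerivAt_id _
  · simp only [if_neg h]
    have : (fun t => Function.update z i t j) = fun _ => z j :=
      funext fun t => Function.update_of_ne h _ _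
    rw [this]
    exact hasDerivAt_const _ _

lemma uu_eq_uu (k l : ℕ) : uu k = uu l ↔ k = l := by simp [uu]

lemma vv_eq_vv (k l : ℕ) : vv k = vv l ↔ k = l := by simp [vv]

lemma uu_ne_uu {k l : ℕ} (h : k ≠ l) : uu k ≠ uu l := fun hc => h ((uu_eq_uu k l).1 hc)

lemma vv_ne_vv {k l : ℕ} (h : k ≠ l) : vv k ≠ vv l := fun hc => h ((vv_eq_vv k l).1 hc)

lemma X3op_coord_u (k : ℕ) (z : J → ℝ) :
    X3op (fun w => w (uu (k + 1))) z = z (vv (k + 1)) := by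
  show (∑' j : ℕ, (z (vv (j + 1)) * pd (uu (j + 1)) (fun w => w (uu (k + 1))) z
      + 12 * c j z * pd (vv (j + 1)) (fun w => w (uu (k + 1))) z)) = z (vv (k + 1))
  rw [tsum_eq_single k ?_]
  · rw [pd_coord, pd_coord, if_pos rfl, if_neg (uu_ne_vv (k + 1) (k + 1))]
    ring
  · intro j hj
    rw [pd_coord, pd_coord, if_neg (uu_ne_uu (by omega : k + 1 ≠ j + 1)),
      if_neg (uu_ne_vv (k + 1) (j + 1))]
    ring

lemma X3op_coord_v (k : ℕ) (z : J → ℝ) :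
    X3op (fun w => w (vv (k + 1))) z = 12 * c k z := by
  show (∑' j : ℕ, (z (vv (j + 1)) * pd (uu (j + 1)) (fun w => w (vv (k + 1))) z
      + 12 * c j z * pd (vv (j + 1)) (fun w => w (vv (k + 1))) z)) = 12 * c k z
  rw [tsum_eq_single k ?_]
  · rw [pd_coord, pd_coord, if_pos rfl, if_neg (vv_ne_uu (k + 1) (k + 1))]
    ring
  · intro j hj
    rw [pd_coord, pd_coord, if_neg (vv_ne_vv (by omega : k + 1 ≠ j + 1)),
      if_neg (vv_ne_uu (k + 1) (j + 1))]
    ring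

lemma X13op_coord_u (k : ℕ) (z : J → ℝ) :
    X13op (fun w => w (uu (k + 1))) z = 0 := by
  show (12:ℝ) * (∑' j : ℕ, z (uu (j + 1)) * pd (vv (j + 1)) (fun w => w (uu (k + 1))) z) = 0
  have : ∀ j : ℕ, z (uu (j + 1)) * pd (vv (j + 1)) (fun w => w (uu (k + 1))) z = 0 := by
    intro j
    rw [pd_coord, if_neg (uu_ne_vv (k + 1) (j + 1))]
    ring
  rw [tsum_congr this, tsum_zero]
  ring

lemma X13op_coord_v (k : ℕ) (z : J → ℝ) :
    X13op (fun w => w (vv (k + 1))) z = 12 * z (uu (k + 1)) := by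
  show (12:ℝ) * (∑' j : ℕ, z (uu (j + 1)) * pd (vv (j + 1)) (fun w => w (vv (k + 1))) z)
      = 12 * z (uu (k + 1))
  rw [tsum_eq_single k ?_]
  · rw [pd_coord, if_pos rfl]
    ring
  · intro j hj
    rw [pd_coord, if_neg (vv_ne_vv (by omega : k + 1 ≠ j + 1))]
    ring

lemma X313op_coord_u (k : ℕ) (z : J → ℝ) :
    X313op (fun w => w (uu (k + 1))) z = -(12 * z (uu (k + 1))) := by
  show (12:ℝ) * (∑' j : ℕ, (z (vv (j + 1)) * pd (vv (j + 1)) (fun w => w (uu (k + 1))) z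
      - z (uu (j + 1)) * pd (uu (j + 1)) (fun w => w (uu (k + 1))) z)) = -(12 * z (uu (k + 1)))
  rw [tsum_eq_single k ?_]
  · rw [pd_coord, pd_coord, if_pos rfl, if_neg (uu_ne_vv (k + 1) (k + 1))]
    ring
  · intro j hj
    rw [pd_coord, pd_coord, if_neg (uu_ne_uu (by omega : k + 1 ≠ j + 1)),
      if_neg (uu_ne_vv (k + 1) (j + 1))]
    ring

lemma X313op_coord_v (k : ℕ) (z : J → ℝ) :
    X313op (fun w => w (vv (k + 1))) z = 12 * z (vv (k + 1)) := by
  show (12:ℝ) * (∑' j : ℕ, (z (vv (j + 1)) * pd (vv (j + 1)) (fun w => w (vv (k + 1))) z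
      - z (uu (j + 1)) * pd (uu (j + 1)) (fun w => w (vv (k + 1))) z)) = 12 * z (vv (k + 1))
  rw [tsum_eq_single k ?_]
  · rw [pd_coord, pd_coord, if_pos rfl, if_neg (vv_ne_uu (k + 1) (k + 1))]
    ring
  · intro j hj
    rw [pd_coord, pd_coord, if_neg (vv_ne_vv (by omega : k + 1 ≠ j + 1)),
      if_neg (vv_ne_uu (k + 1) (j + 1))]
    ring

lemma X3op_const_mul (a : ℝ) (F : (J → ℝ) → ℝ) (z : J → ℝ) :
    X3op (fun w => a * F w) z = a * X3op F z := by
  show (∑' j : ℕ, (z (vv (j + 1)) * pd (uu (j + 1)) (fun w => a * F w) z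
      + 12 * c j z * pd (vv (j + 1)) (fun w => a * F w) z))
    = a * ∑' j : ℕ, (z (vv (j + 1)) * pd (uu (j + 1)) F z + 12 * c j z * pd (vv (j + 1)) F z)
  rw [← tsum_mul_left]
  refine tsum_congr fun j => ?_
  rw [pd_const_mul, pd_const_mul]
  ring

lemma X313op_const_mul (a : ℝ) (F : (J → ℝ) → ℝ) (z : J → ℝ) :
    X313op (fun w => a * F w) z = a * X313op F z := by
  show (12:ℝ) * (∑' j : ℕ, (z (vv (j + 1)) * pd (vv (j + 1)) (fun w => a * F w) z
      - z (uu (j + 1)) * pd (uu (j + 1)) (fun w => a * F w) z))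
    = a * ((12:ℝ) * ∑' j : ℕ, (z (vv (j + 1)) * pd (vv (j + 1)) F z
      - z (uu (j + 1)) * pd (uu (j + 1)) F z))
  have h : (∑' j : ℕ, (z (vv (j + 1)) * pd (vv (j + 1)) (fun w => a * F w) z
      - z (uu (j + 1)) * pd (uu (j + 1)) (fun w => a * F w) z))
      = ∑' j : ℕ, a * (z (vv (j + 1)) * pd (vv (j + 1)) F z
      - z (uu (j + 1)) * pd (uu (j + 1)) F z) := by
    refine tsum_congr fun j => ?_
    rw [pd_const_mul, pd_const_mul]
    ring
  rw [h, tsum_mul_left]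
  ring

lemma pd_c0 (i : J) (z : J → ℝ) :
    pd i (c 0) z = (if uu 0 = i then 1 else 0) * z (uu 1)
      + z (uu 0) * (if uu 1 = i then 1 else 0) := by
  have h := ((hasDerivAt_coord z i (uu 0)).mul (hasDerivAt_coord z i (uu 1))).deriv
  show deriv (fun t => Function.update z i t (uu 0) * Function.update z i t (uu 1)) (z i) = _
  refine h.trans ?_
  simp only [Function.update_eq_self]

lemma c1_eq (z : J → ℝ) : c 1 z = z (uu 1) * z (uu 1) + z (uu 2) * z (uu 0) := by
  show (∑' j : ℕ, (z (uu (j + 1)) * pd (uu j) (c 0) z + z (vv (j + 1)) * pd (vv j) (c 0) z)) = _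
  rw [tsum_eq_sum (s := Finset.range 2) ?_]
  · rw [Finset.sum_range_succ, Finset.sum_range_one]
    rw [pd_c0 (uu 0), pd_c0 (vv 0), pd_c0 (uu 1), pd_c0 (vv 1)]
    rw [if_pos rfl, if_neg (uu_ne_uu (by omega : (1:ℕ) ≠ 0)),
      if_neg (uu_ne_vv 0 0), if_neg (uu_ne_vv 1 0),
      if_neg (uu_ne_uu (by omega : (0:ℕ) ≠ 1)), if_pos rfl,
      if_neg (uu_ne_vv 0 1), if_neg (uu_ne_vv 1 1)]
    ring
  · intro j hj
    have hj2 : 2 ≤ j := by simp at hj; omega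
    rw [pd_c0 (uu j), pd_c0 (vv j)]
    rw [if_neg (uu_ne_uu (by omega : 0 ≠ j)), if_neg (uu_ne_uu (by omega : 1 ≠ j)),
      if_neg (uu_ne_vv 0 j), if_neg (uu_ne_vv 1 j)]
    ring

lemma pd_c1 (i : J) (z : J → ℝ) :
    pd i (c 1) z = ((if uu 1 = i then 1 else 0) * z (uu 1)
        + z (uu 1) * (if uu 1 = i then 1 else 0))
      + ((if uu 2 = i then 1 else 0) * z (uu 0)
        + z (uu 2) * (if uu 0 = i then 1 else 0)) := by
  have hc1 : c 1 = fun w => w (uu 1) * w (uu 1) + w (uu 2) * w (uu 0) := funext c1_eq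
  rw [hc1]
  have h := (((hasDerivAt_coord z i (uu 1)).mul (hasDerivAt_coord z i (uu 1))).add
    ((hasDerivAt_coord z i (uu 2)).mul (hasDerivAt_coord z i (uu 0)))).deriv
  show deriv (fun t => Function.update z i t (uu 1) * Function.update z i t (uu 1)
    + Function.update z i t (uu 2) * Function.update z i t (uu 0)) (z i) = _
  refine h.trans ?_
  simp only [Function.update_eq_self]

lemma X313op_c0 (z : J → ℝ) : X313op (c 0) z = -(12 * (z (uu 0) * z (uu 1))) := by
  show (12:ℝ) * (∑' j : ℕ, (z (vv (j + 1)) * pd (vv (j + 1)) (c 0) z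
      - z (uu (j + 1)) * pd (uu (j + 1)) (c 0) z)) = _
  rw [tsum_eq_single 0 ?_]
  · rw [pd_c0 (vv (0 + 1)), pd_c0 (uu (0 + 1))]
    rw [if_neg (uu_ne_vv 0 (0 + 1)), if_neg (uu_ne_vv 1 (0 + 1)),
      if_neg (uu_ne_uu (by omega : 0 ≠ 0 + 1)), if_pos rfl]
    ring
  · intro j hj
    rw [pd_c0 (vv (j + 1)), pd_c0 (uu (j + 1))]
    rw [if_neg (uu_ne_vv 0 (j + 1)), if_neg (uu_ne_vv 1 (j + 1)),
      if_neg (uu_ne_uu (by omega : 0 ≠ j + 1)),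
      if_neg (uu_ne_uu (by omega : 1 ≠ j + 1))]
    ring

lemma X313op_c1 (z : J → ℝ) :
    X313op (c 1) z = -(24 * (z (uu 1) * z (uu 1))) - 12 * (z (uu 2) * z (uu 0)) := by
  show (12:ℝ) * (∑' j : ℕ, (z (vv (j + 1)) * pd (vv (j + 1)) (c 1) z
      - z (uu (j + 1)) * pd (uu (j + 1)) (c 1) z)) = _
  rw [tsum_eq_sum (s := Finset.range 2) ?_]
  · rw [Finset.sum_range_succ, Finset.sum_range_one]
    rw [pd_c1 (vv (0 + 1)), pd_c1 (uu (0 + 1)), pd_c1 (vv (1 + 1)), pd_c1 (uu (1 + 1))]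
    rw [if_neg (uu_ne_vv 0 (0 + 1)), if_neg (uu_ne_vv 1 (0 + 1)), if_neg (uu_ne_vv 2 (0 + 1)),
      if_neg (uu_ne_vv 0 (1 + 1)), if_neg (uu_ne_vv 1 (1 + 1)), if_neg (uu_ne_vv 2 (1 + 1)),
      if_pos (rfl : uu 1 = uu (0 + 1)), if_neg (uu_ne_uu (by omega : 2 ≠ 0 + 1)),
      if_neg (uu_ne_uu (by omega : 0 ≠ 0 + 1)),
      if_neg (uu_ne_uu (by omega : 1 ≠ 1 + 1)), if_pos (rfl : uu 2 = uu (1 + 1)),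
      if_neg (uu_ne_uu (by omega : 0 ≠ 1 + 1))]
    ring
  · intro j hj
    have hj2 : 2 ≤ j := by simp at hj; omega
    rw [pd_c1 (vv (j + 1)), pd_c1 (uu (j + 1))]
    rw [if_neg (uu_ne_vv 0 (j + 1)), if_neg (uu_ne_vv 1 (j + 1)), if_neg (uu_ne_vv 2 (j + 1)),
      if_neg (uu_ne_uu (by omega : 0 ≠ j + 1)),
      if_neg (uu_ne_uu (by omega : 1 ≠ j + 1)),
      if_neg (uu_ne_uu (by omega : 2 ≠ j + 1))]
    ring

end compute

section part2

lemma c0_eq (z : J → ℝ) : c 0 z = z (uu 0) * z (uu 1) := rfl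

lemma X3313op_coord_u (k : ℕ) (z : J → ℝ) :
    X3313op (fun w => w (uu (k + 1))) z = -(24 * z (vv (k + 1))) := by
  show X3op (X313op (fun w => w (uu (k + 1)))) z
      - X313op (X3op (fun w => w (uu (k + 1)))) z = _
  have h1 : X313op (fun w => w (uu (k + 1))) = fun w => (-12:ℝ) * w (uu (k + 1)) :=
    funext fun w => by rw [X313op_coord_u]; ring
  have h2 : X3op (fun w => w (uu (k + 1))) = fun w => w (vv (k + 1)) :=
    funext fun w => X3op_coord_u k w
  rw [h1, h2, X3op_const_mul, X3op_coord_u, X313op_coord_v]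
  ring

lemma X3313op_coord_v1 (z : J → ℝ) :
    X3313op (fun w => w (vv (0 + 1))) z = 288 * (z (uu 0) * z (uu 1)) := by
  show X3op (X313op (fun w => w (vv (0 + 1)))) z
      - X313op (X3op (fun w => w (vv (0 + 1)))) z = _
  have h1 : X313op (fun w => w (vv (0 + 1))) = fun w => (12:ℝ) * w (vv (0 + 1)) :=
    funext fun w => X313op_coord_v 0 w
  have h2 : X3op (fun w => w (vv (0 + 1))) = fun w => (12:ℝ) * c 0 w :=
    funext fun w => X3op_coord_v 0 w
  rw [h1, h2, X3op_const_mul, X3op_coord_v, X313op_const_mul, X313op_c0, c0_eq]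
  ring

lemma X3313op_coord_v2 (z : J → ℝ) :
    X3313op (fun w => w (vv (1 + 1))) z
      = 432 * (z (uu 1) * z (uu 1)) + 288 * (z (uu 2) * z (uu 0)) := by
  show X3op (X313op (fun w => w (vv (1 + 1)))) z
      - X313op (X3op (fun w => w (vv (1 + 1)))) z = _
  have h1 : X313op (fun w => w (vv (1 + 1))) = fun w => (12:ℝ) * w (vv (1 + 1)) :=
    funext fun w => X313op_coord_v 1 w
  have h2 : X3op (fun w => w (vv (1 + 1))) = fun w => (12:ℝ) * c 1 w :=
    funext fun w => X3op_coord_v 1 w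
  rw [h1, h2, X3op_const_mul, X3op_coord_v, X313op_const_mul, X313op_c1, c1_eq]
  ring

/-- A smooth cylindrical function is continuous along a curve with continuous coordinates. -/
lemma smoothCyl_cont {f : (J → ℝ) → ℝ} (hf : SmoothCyl f) {γ : ℝ → J → ℝ}
    (hγ : ∀ j, Continuous fun s => γ s j) : Continuous fun s => f (γ s) := by
  obtain ⟨n, v, g, hg, hfg⟩ := hf
  have : (fun s => f (γ s)) = fun s => g fun k => γ s (v k) := funext fun s => hfg (γ s)
  rw [this]
  exact hg.continuous.comp (continuous_pi fun k => hγ (v k))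

lemma cont_coord_update {γ : ℝ → J → ℝ} (hγ : ∀ j, Continuous fun s => γ s j)
    (i : J) {g : ℝ → ℝ} (hg : Continuous g) :
    ∀ j, Continuous fun s => Function.update (γ s) i (g s) j := by
  intro j
  by_cases h : j = i
  · subst h
    simp only [Function.update_self]
    exact hg
  · simp only [Function.update_of_ne h]
    exact hγ j

lemma zero_of_zero_off_finite {h : ℝ → ℝ} (hc : Continuous h) {S : Set ℝ}
    (hS : S.Finite) (hz : ∀ s, s ∉ S → h s = 0) : ∀ s, h s = 0 := by
  intro s
  have hd : Dense Sᶜ := hS.countable.dense_compl ℝ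
  have hsub : Sᶜ ⊆ {x : ℝ | h x = 0} := fun x hx => hz x hx
  have hcl : IsClosed {x : ℝ | h x = 0} := isClosed_eq hc continuous_const
  have hmem := closure_mono hsub (hd s)
  rwa [hcl.closure_eq] at hmem

lemma quad_finite (b c : ℝ) : {s : ℝ | s ^ 2 + b * s + c = 0}.Finite := by
  classical
  set p : Polynomial ℝ := Polynomial.X ^ 2 + Polynomial.C b * Polynomial.X + Polynomial.C c
    with hp
  have hpne : p ≠ 0 := by
    intro hzero
    have h2 : p.coeff 2 = 1 := by
      simp [hp, Polynomial.coeff_X_pow, Polynomial.coeff_C]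
    rw [hzero] at h2
    simp at h2
  have hset : {s : ℝ | s ^ 2 + b * s + c = 0} = {x : ℝ | p.IsRoot x} := by
    ext s
    simp [hp, Polynomial.IsRoot]
  rw [hset]
  exact Polynomial.finite_setOf_isRoot hpne

end part2

section final

lemma no_relation :
    ¬ ∃ A B C D : (J → ℝ) → ℝ,
      SmoothCyl A ∧ SmoothCyl B ∧ SmoothCyl C ∧ SmoothCyl D ∧
      (A ≠ 0 ∨ B ≠ 0 ∨ C ≠ 0 ∨ D ≠ 0) ∧
      ∀ f z, A z * X3op f z + B z * X13op f z + C z * X313op f z + D z * X3313op f z = 0 := by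
  rintro ⟨A, B, C, D, hA, hB, hC, hD, hne, hrel⟩
  -- the four basic pointwise equations
  have E1 : ∀ z : J → ℝ,
      A z * z (vv 1) - 12 * C z * z (uu 1) - 24 * D z * z (vv 1) = 0 := by
    intro z
    have h := hrel (fun w => w (uu (0 + 1))) z
    rw [X3op_coord_u 0 z, X13op_coord_u 0 z, X313op_coord_u 0 z, X3313op_coord_u 0 z] at h
    norm_num at h
    linear_combination h
  have E2 : ∀ z : J → ℝ,
      12 * A z * (z (uu 0) * z (uu 1)) + 12 * B z * z (uu 1) + 12 * C z * z (vv 1)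
        + 288 * D z * (z (uu 0) * z (uu 1)) = 0 := by
    intro z
    have h := hrel (fun w => w (vv (0 + 1))) z
    rw [X3op_coord_v 0 z, X13op_coord_v 0 z, X313op_coord_v 0 z, X3313op_coord_v1 z,
      c0_eq] at h
    norm_num at h
    linear_combination h
  have E3 : ∀ z : J → ℝ,
      A z * z (vv 2) - 12 * C z * z (uu 2) - 24 * D z * z (vv 2) = 0 := by
    intro z
    have h := hrel (fun w => w (uu (1 + 1))) z
    rw [X3op_coord_u 1 z, X13op_coord_u 1 z, X313op_coord_u 1 z, X3313op_coord_u 1 z] at h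
    norm_num at h
    linear_combination h
  have E4 : ∀ z : J → ℝ,
      12 * A z * (z (uu 1) * z (uu 1) + z (uu 2) * z (uu 0)) + 12 * B z * z (uu 2)
        + 12 * C z * z (vv 2) + 432 * D z * (z (uu 1) * z (uu 1))
        + 288 * D z * (z (uu 2) * z (uu 0)) = 0 := by
    intro z
    have h := hrel (fun w => w (vv (1 + 1))) z
    rw [X3op_coord_v 1 z, X13op_coord_v 1 z, X313op_coord_v 1 z, X3313op_coord_v2 z,
      c1_eq] at h
    norm_num at h
    linear_combination h
  -- derived pointwise identities
  have G1 : ∀ z : J → ℝ, (A z + 36 * D z) * (z (uu 1)) ^ 3 = 0 := by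
    intro z
    linear_combination ((-1:ℝ)/12) * (z (uu 2) * E2 z - z (uu 1) * E4 z
      - z (vv 2) * E1 z + z (vv 1) * E3 z)
  have G2 : ∀ z : J → ℝ, C z * (z (uu 1) * z (vv 2) - z (uu 2) * z (vv 1)) = 0 := by
    intro z
    linear_combination ((-1:ℝ)/12) * (z (vv 2) * E1 z - z (vv 1) * E3 z)
  -- A + 36 D vanishes everywhere
  have hAD : ∀ z0 : J → ℝ, A z0 + 36 * D z0 = 0 := by
    intro z0
    set γ : ℝ → J → ℝ := fun s => Function.update z0 (uu 1) (z0 (uu 1) + s) with hγ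
    have hγc : ∀ j, Continuous fun s => γ s j := by
      intro j
      simp only [hγ]
      by_cases h : j = uu 1
      · subst h
        simp only [Function.update_self]
        exact continuous_const.add continuous_id
      · simp only [Function.update_of_ne h]
        exact continuous_const
    have hcont : Continuous fun s => A (γ s) + 36 * D (γ s) :=
      (smoothCyl_cont hA hγc).add (continuous_const.mul (smoothCyl_cont hD hγc))
    have hzero : ∀ s, s ∉ ({-(z0 (uu 1))} : Set ℝ) → A (γ s) + 36 * D (γ s) = 0 := by
      intro s hs
      have hg := G1 (γ s)
      have hcoord : γ s (uu 1) = z0 (uu 1) + s := by simp [hγ]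
      rw [hcoord] at hg
      have hne3 : (z0 (uu 1) + s) ^ 3 ≠ 0 := by
        apply pow_ne_zero
        intro h0
        exact hs (by simp only [Set.mem_singleton_iff]; linarith)
      exact (mul_eq_zero.1 hg).resolve_right hne3
    have hall := zero_of_zero_off_finite hcont (Set.finite_singleton _) hzero 0
    have hγ0 : γ 0 = z0 := by
      simp [hγ]
    rwa [hγ0] at hall
  -- C vanishes everywhere
  have hC0 : ∀ z0 : J → ℝ, C z0 = 0 := by
    intro z0
    set γ : ℝ → J → ℝ := fun s =>
      Function.update (Function.update z0 (uu 1) (z0 (uu 1) + s)) (vv 2) (z0 (vv 2) + s)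
      with hγ
    have hγc : ∀ j, Continuous fun s => γ s j := by
      intro j
      simp only [hγ]
      by_cases h2 : j = vv 2
      · subst h2
        simp only [Function.update_self]
        exact continuous_const.add continuous_id
      · simp only [Function.update_of_ne h2]
        by_cases h1 : j = uu 1
        · subst h1
          simp only [Function.update_self]
          exact continuous_const.add continuous_id
        · simp only [Function.update_of_ne h1]
          exact continuous_const
    have hcont : Continuous fun s => C (γ s) := smoothCyl_cont hC hγc
    set S : Set ℝ := {s : ℝ | s ^ 2 + (z0 (uu 1) + z0 (vv 2)) * s
      + (z0 (uu 1) * z0 (vv 2) - z0 (uu 2) * z0 (vv 1)) = 0} with hS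
    have hzero : ∀ s, s ∉ S → C (γ s) = 0 := by
      intro s hs
      have hg := G2 (γ s)
      have h1 : γ s (uu 1) = z0 (uu 1) + s := by
        simp only [hγ]
        rw [Function.update_of_ne (by decide : uu 1 ≠ vv 2)]
        simp
      have h2 : γ s (vv 2) = z0 (vv 2) + s := by simp [hγ]
      have h3 : γ s (uu 2) = z0 (uu 2) := by
        simp only [hγ]
        rw [Function.update_of_ne (by decide : uu 2 ≠ vv 2),
          Function.update_of_ne (by decide : uu 2 ≠ uu 1)]
      have h4 : γ s (vv 1) = z0 (vv 1) := by
        simp only [hγ]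
        rw [Function.update_of_ne (by decide : vv 1 ≠ vv 2),
          Function.update_of_ne (by decide : vv 1 ≠ uu 1)]
      rw [h1, h2, h3, h4] at hg
      have hfac : (z0 (uu 1) + s) * (z0 (vv 2) + s) - z0 (uu 2) * z0 (vv 1)
          = s ^ 2 + (z0 (uu 1) + z0 (vv 2)) * s
            + (z0 (uu 1) * z0 (vv 2) - z0 (uu 2) * z0 (vv 1)) := by ring
      rw [hfac] at hg
      exact (mul_eq_zero.1 hg).resolve_right hs
    have hall := zero_of_zero_off_finite hcont (quad_finite _ _) hzero 0
    have hγ0 : γ 0 = z0 := by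
      simp [hγ]
    rwa [hγ0] at hall
  -- D vanishes everywhere
  have hD0 : ∀ z0 : J → ℝ, D z0 = 0 := by
    intro z0
    set γ : ℝ → J → ℝ := fun s => Function.update z0 (vv 1) (z0 (vv 1) + s) with hγ
    have hγc : ∀ j, Continuous fun s => γ s j := by
      intro j
      simp only [hγ]
      by_cases h : j = vv 1
      · subst h
        simp only [Function.update_self]
        exact continuous_const.add continuous_id
      · simp only [Function.update_of_ne h]
        exact continuous_const
    have hcont : Continuous fun s => D (γ s) := smoothCyl_cont hD hγc
    have hzero : ∀ s, s ∉ ({-(z0 (vv 1))} : Set ℝ) → D (γ s) = 0 := by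
      intro s hs
      have h := E1 (γ s)
      have h1 : γ s (vv 1) = z0 (vv 1) + s := by simp [hγ]
      rw [h1] at h
      have hADs := hAD (γ s)
      have hc := hC0 (γ s)
      have hkey : D (γ s) * (z0 (vv 1) + s) = 0 := by
        linear_combination (-(1:ℝ)/60) * h + ((z0 (vv 1) + s)/60) * hADs
          - (γ s (uu 1) * 12/60) * hc
      have hne : z0 (vv 1) + s ≠ 0 := by
        intro h0
        exact hs (by simp only [Set.mem_singleton_iff]; linarith)
      exact (mul_eq_zero.1 hkey).resolve_right hne
    have hall := zero_of_zero_off_finite hcont (Set.finite_singleton _) hzero 0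
    have hγ0 : γ 0 = z0 := by
      simp [hγ]
    rwa [hγ0] at hall
  have hA0 : ∀ z0 : J → ℝ, A z0 = 0 := by
    intro z0
    have h1 := hAD z0
    have h2 := hD0 z0
    linarith
  -- B vanishes everywhere
  have hB0 : ∀ z0 : J → ℝ, B z0 = 0 := by
    intro z0
    set γ : ℝ → J → ℝ := fun s => Function.update z0 (uu 1) (z0 (uu 1) + s) with hγ
    have hγc : ∀ j, Continuous fun s => γ s j := by
      intro j
      simp only [hγ]
      by_cases h : j = uu 1
      · subst h
        simp only [Function.update_self]
        exact continuous_const.add continuous_id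
      · simp only [Function.update_of_ne h]
        exact continuous_const
    have hcont : Continuous fun s => B (γ s) := smoothCyl_cont hB hγc
    have hzero : ∀ s, s ∉ ({-(z0 (uu 1))} : Set ℝ) → B (γ s) = 0 := by
      intro s hs
      have h := E2 (γ s)
      have h1 : γ s (uu 1) = z0 (uu 1) + s := by simp [hγ]
      rw [h1] at h
      have ha := hA0 (γ s)
      have hc := hC0 (γ s)
      have hd := hD0 (γ s)
      have hkey : B (γ s) * (z0 (uu 1) + s) = 0 := by
        linear_combination ((1:ℝ)/12) * h
          - ((γ s (uu 0)) * (z0 (uu 1) + s)) * ha - (γ s (vv 1)) * hc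
          - (24 * (γ s (uu 0)) * (z0 (uu 1) + s)) * hd
      have hne : z0 (uu 1) + s ≠ 0 := by
        intro h0
        exact hs (by simp only [Set.mem_singleton_iff]; linarith)
      exact (mul_eq_zero.1 hkey).resolve_right hne
    have hall := zero_of_zero_off_finite hcont (Set.finite_singleton _) hzero 0
    have hγ0 : γ 0 = z0 := by
      simp [hγ]
    rwa [hγ0] at hall
  rcases hne with h | h | h | h
  · exact h (funext fun z => hA0 z)
  · exact h (funext fun z => hB0 z)
  · exact h (funext fun z => hC0 z)
  · exact h (funext fun z => hD0 z)

end final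

/-- In the `x`-characteristic ring of `u_{xy} = v_x`, `v_{xy} = 12 u u_x`:
all the other brackets of length `2, 3, 4` vanish (`X23 = 0`, `X113 = X213 = 0`,
`X1313 = X2313 = 0`), and the operators `X3, X13, X313, X3313` are linearly independent over
the (smooth, finitely-based) functions of the jet variables; consequently `dim L_k = 1` for
`k = 2, 3, 4`. -/
theorem stmt18 :
    (∀ f, SmoothCyl f →
      (∀ z, pd (vv 0) (X3op f) z - X3op (pd (vv 0) f) z = 0) ∧
      (∀ z, pd (uu 0) (X13op f) z - X13op (pd (uu 0) f) z = 0) ∧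
      (∀ z, pd (vv 0) (X13op f) z - X13op (pd (vv 0) f) z = 0) ∧
      (∀ z, pd (uu 0) (X313op f) z - X313op (pd (uu 0) f) z = 0) ∧
      (∀ z, pd (vv 0) (X313op f) z - X313op (pd (vv 0) f) z = 0)) ∧
    ¬ ∃ A B C D : (J → ℝ) → ℝ,
      SmoothCyl A ∧ SmoothCyl B ∧ SmoothCyl C ∧ SmoothCyl D ∧
      (A ≠ 0 ∨ B ≠ 0 ∨ C ≠ 0 ∨ D ≠ 0) ∧
      ∀ f z, A z * X3op f z + B z * X13op f z + C z * X313op f z + D z * X3313op f z = 0 := by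
  constructor
  · intro f hf
    refine ⟨fun z => comm_vv0_X3 hf z,
      fun z => comm_X13 hf (uu 0) (fun k => uu_ne_uu (by omega)) (fun k => vv_ne_uu _ _) z,
      fun z => comm_X13 hf (vv 0) (fun k => uu_ne_vv _ _) (fun k => vv_ne_vv (by omega)) z,
      fun z => comm_X313 hf (uu 0) (fun k => uu_ne_uu (by omega)) (fun k => vv_ne_uu _ _) z,
      fun z => comm_X313 hf (vv 0) (fun k => uu_ne_vv _ _) (fun k => vv_ne_vv (by omega)) z⟩
  · exact no_relation
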